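/- Let V be the 6×9 integer matrix whose columns are the vectors b = (2,1,2,1,3,2), c = (1,1,1,1,2,1), f = (1,0,1,0,1,1), d1 = (1,1,1,0,1,1), e1 = (1,1,0,0,1,1), g1 = (1,0,0,0,1,0), d2 = (1,0,1,1,1,1), e2 = (0,0,1,1,1,1), g2 = (0,0,1,0,1,0), and let Q = Vᵀ (V Vᵀ)⁻¹ V (a 9×9 rational matrix; V Vᵀ is invertible since the columns span ℚ^6). Then a permutation σ of the index set {1, ..., 9} is induced by an invertible linear map F : ℚ^6 → ℚ^6 with F(v_i) = v_{σ(i)} for all i if and only if Q_{σ(i), σ(j)} = Q_{i,j} for all i, j. -/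

import Mathlib

set_option maxRecDepth 4000


/-- The `6 × 9` matrix whose columns are the ray generators
`b, c, f, d1, e1, g1, d2, e2, g2` (in this order), vectors of `ℚ^6` in
coordinates `(λ1, λ2, μ1, μ2, ν1, ν2)`. -/
def V : Matrix (Fin 6) (Fin 9) ℚ :=
  !![2,1,1,1,1,1,1,0,0;
     1,1,0,1,1,0,0,0,0;
     2,1,1,1,0,0,1,1,1;
     1,1,0,0,0,0,1,1,0;
     3,2,1,1,1,1,1,1,1;
     2,1,1,1,1,0,1,1,0]

/-- The Gram-type projection matrix `Q = Vᵀ (V Vᵀ)⁻¹ V`. -/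
noncomputable def Q : Matrix (Fin 9) (Fin 9) ℚ := V.transpose * (V * V.transpose)⁻¹ * V

/-- The `i`-th column of `V`, as a vector of `ℚ^6`. -/
def col (i : Fin 9) : Fin 6 → ℚ := fun r => V r i

namespace BDS

open Matrix

def Gm : Matrix (Fin 6) (Fin 6) ℚ := V * V.transpose

def Hm : Matrix (Fin 6) (Fin 6) ℚ :=
  !![4/3, 1/3, 2/3, 2/3, -1, -1;
     1/3, 46/39, 2/3, 20/39, -9/13, -11/13;
     2/3, 2/3, 4/3, 1/3, -1, -1;
     2/3, 20/39, 1/3, 46/39, -9/13, -11/13;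
     -1, -9/13, -1, -9/13, 18/13, 9/13;
     -1, -11/13, -1, -11/13, 9/13, 24/13]

lemma Gm_apply (i j : Fin 6) : Gm i j = ∑ k, V i k * V j k := by
  simp [Gm, Matrix.mul_apply]

set_option maxRecDepth 10000 in
lemma Gm_eq : Gm = !![10,5,8,4,13,9; 5,4,4,2,7,5; 8,4,10,5,13,9; 4,2,5,4,7,5;
    13,7,13,7,20,13; 9,5,9,5,13,10] := by
  ext i j
  rw [Gm_apply]
  fin_cases i <;> fin_cases j <;>
    norm_num [V, Fin.sum_univ_succ]

set_option maxRecDepth 10000 in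
lemma GH : Gm * Hm = 1 := by
  rw [Gm_eq]; ext i j
  fin_cases i <;> fin_cases j <;>
    norm_num [Hm, Matrix.mul_apply, Fin.sum_univ_succ, Matrix.one_apply, Fin.ext_iff]

set_option maxRecDepth 10000 in
lemma HG : Hm * Gm = 1 := by
  rw [Gm_eq]; ext i j
  fin_cases i <;> fin_cases j <;>
    norm_num [Hm, Matrix.mul_apply, Fin.sum_univ_succ, Matrix.one_apply, Fin.ext_iff]

noncomputable instance : Invertible Gm := invertibleOfRightInverse Gm _ GH

lemma G_mul_Ginv : Gm * Gm⁻¹ = 1 :=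
  Matrix.mul_nonsing_inv _ (Matrix.isUnit_det_of_invertible Gm)

lemma Ginv_mul_G : Gm⁻¹ * Gm = 1 :=
  Matrix.nonsing_inv_mul _ (Matrix.isUnit_det_of_invertible Gm)

lemma Gm_def : Gm = V * Vᵀ := by unfold Gm; rfl

lemma Q_eq : Q = Vᵀ * Gm⁻¹ * V := by unfold Q Gm; rfl

/-- The permutation matrix of `τ` acting on columns: `(Pm τ) k j = 1 ↔ k = τ j`. -/
def Pm (τ : Equiv.Perm (Fin 9)) : Matrix (Fin 9) (Fin 9) ℚ :=
  Matrix.of fun k j => if k = τ j then 1 else 0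

lemma mul_Pm {m : Type*} [Fintype m] (A : Matrix m (Fin 9) ℚ) (τ : Equiv.Perm (Fin 9)) :
    A * Pm τ = Matrix.of fun i j => A i (τ j) := by
  ext i j
  simp [Pm, Matrix.mul_apply]

lemma Pm_mul_Pm (τ ρ : Equiv.Perm (Fin 9)) : Pm τ * Pm ρ = Pm (τ * ρ) := by
  rw [mul_Pm]
  ext i j
  simp [Pm, Equiv.Perm.mul_apply]
  rfl

lemma Pm_one : Pm 1 = 1 := by
  ext i j
  simp [Pm, Matrix.one_apply]
  rfl

lemma Pm_inv_mul (τ : Equiv.Perm (Fin 9)) : Pm τ * Pm τ⁻¹ = 1 := by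
  rw [Pm_mul_Pm, show τ * τ⁻¹ = 1 by group, Pm_one]

lemma Pm_transpose (τ : Equiv.Perm (Fin 9)) : (Pm τ)ᵀ = Pm τ⁻¹ := by
  ext i j
  simp only [Matrix.transpose_apply, Pm, Matrix.of_apply]
  congr 1
  simp only [eq_iff_iff]
  constructor
  · rintro rfl; simp
  · rintro rfl; simp

lemma Pm_mul {m : Type*} [Fintype m] (A : Matrix (Fin 9) m ℚ) (τ : Equiv.Perm (Fin 9)) :
    Pm τ * A = Matrix.of fun i j => A (τ⁻¹ i) j := by
  have h : Pm τ * A = (Aᵀ * (Pm τ)ᵀ)ᵀ := by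
    rw [Matrix.transpose_mul, Matrix.transpose_transpose, Matrix.transpose_transpose]
  rw [h, Pm_transpose, mul_Pm]
  ext i j
  rfl

lemma V_mul_Q : V * Q = V := by
  rw [Q_eq, ← Matrix.mul_assoc, ← Matrix.mul_assoc, show V * Vᵀ = Gm from rfl,
    G_mul_Ginv, Matrix.one_mul]

lemma forward (σ : Equiv.Perm (Fin 9))
    (F : (Fin 6 → ℚ) ≃ₗ[ℚ] (Fin 6 → ℚ)) (hF : ∀ i, F (_root_.col i) = _root_.col (σ i)) :
    ∀ i j, Q (σ i) (σ j) = Q i j := by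
  set M : Matrix (Fin 6) (Fin 6) ℚ := LinearMap.toMatrix' (F : (Fin 6 → ℚ) →ₗ[ℚ] (Fin 6 → ℚ))
    with hM
  set M' : Matrix (Fin 6) (Fin 6) ℚ := LinearMap.toMatrix'
    (F.symm : (Fin 6 → ℚ) →ₗ[ℚ] (Fin 6 → ℚ)) with hM'
  have hMM' : M * M' = 1 := by
    rw [hM, hM', ← LinearMap.toMatrix'_comp]
    have h2 : (F : (Fin 6 → ℚ) →ₗ[ℚ] (Fin 6 → ℚ)) ∘ₗ
        (F.symm : (Fin 6 → ℚ) →ₗ[ℚ] (Fin 6 → ℚ)) = LinearMap.id := by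
      ext x
      simp
    rw [h2, LinearMap.toMatrix'_id]
  haveI : Invertible M := invertibleOfRightInverse M _ hMM'
  haveI : Invertible Mᵀ := M.invertibleTranspose
  have hMunit : IsUnit M.det := Matrix.isUnit_det_of_invertible M
  have hMTunit : IsUnit Mᵀ.det := Matrix.isUnit_det_of_invertible Mᵀ
  -- column relation
  have hcol : M * V = V * Pm σ := by
    rw [mul_Pm]
    ext r j
    have h1 : (M * V) r j = (M.mulVec (_root_.col j)) r := by
      simp [Matrix.mul_apply, Matrix.mulVec, dotProduct, _root_.col]
    rw [h1]
    have h2 : M.mulVec (_root_.col j) = F (_root_.col j) := by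
      rw [hM, ← Matrix.toLin'_apply, Matrix.toLin'_toMatrix']
      rfl
    rw [h2, hF]
    rfl
  -- M G Mᵀ = G
  have hG : M * Gm * Mᵀ = Gm := by
    have h1 : M * Gm * Mᵀ = (M * V) * (M * V)ᵀ := by
      rw [Matrix.transpose_mul]
      show M * (V * Vᵀ) * Mᵀ = _
      simp only [Matrix.mul_assoc]
    rw [h1, hcol, Matrix.transpose_mul, Pm_transpose]
    calc (V * Pm σ) * (Pm σ⁻¹ * Vᵀ) = V * (Pm σ * Pm σ⁻¹) * Vᵀ := by
          simp only [Matrix.mul_assoc]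
      _ = Gm := by rw [Pm_inv_mul, Matrix.mul_one, ← Gm_def]
  -- Mᵀ G⁻¹ M = G⁻¹
  have hGinv : Mᵀ * Gm⁻¹ * M = Gm⁻¹ := by
    have hIM : Gm * Mᵀ = M⁻¹ * Gm := by
      have h2 : M⁻¹ * (M * Gm * Mᵀ) = M⁻¹ * Gm := by rw [hG]
      rw [← Matrix.mul_assoc, ← Matrix.mul_assoc, Matrix.nonsing_inv_mul _ hMunit,
        Matrix.one_mul] at h2
      exact h2
    have h3 : Gm * (Mᵀ * Gm⁻¹ * M) = 1 := by
      calc Gm * (Mᵀ * Gm⁻¹ * M) = (Gm * Mᵀ) * Gm⁻¹ * M := by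
            simp only [Matrix.mul_assoc]
        _ = M⁻¹ * (Gm * Gm⁻¹) * M := by rw [hIM]; simp only [Matrix.mul_assoc]
        _ = 1 := by rw [G_mul_Ginv, Matrix.mul_one, Matrix.nonsing_inv_mul _ hMunit]
    exact (Matrix.inv_eq_right_inv h3).symm
  -- Pm σ⁻¹ * Q * Pm σ = Q
  have hQmat : Pm σ⁻¹ * Q * Pm σ = Q := by
    have hPQ : Pm σ⁻¹ * Q * Pm σ = (V * Pm σ)ᵀ * Gm⁻¹ * (V * Pm σ) := by
      rw [Matrix.transpose_mul, Pm_transpose, Q_eq]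
      simp only [Matrix.mul_assoc]
    rw [hPQ, ← hcol, Matrix.transpose_mul, Q_eq]
    calc (Vᵀ * Mᵀ) * Gm⁻¹ * (M * V) = Vᵀ * (Mᵀ * Gm⁻¹ * M) * V := by
          simp only [Matrix.mul_assoc]
      _ = Vᵀ * Gm⁻¹ * V := by rw [hGinv]
  intro i j
  have h3 := congrFun (congrFun hQmat i) j
  rw [Matrix.mul_assoc, mul_Pm, Pm_mul] at h3
  simpa using h3

lemma backward (σ : Equiv.Perm (Fin 9)) (hQ : ∀ i j, Q (σ i) (σ j) = Q i j) :
    ∃ F : (Fin 6 → ℚ) ≃ₗ[ℚ] (Fin 6 → ℚ), ∀ i, F (_root_.col i) = _root_.col (σ i) := by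
  -- Q commutes with Pm σ and Pm σ⁻¹
  have hcomm : Q * Pm σ = Pm σ * Q := by
    ext i j
    rw [mul_Pm, Pm_mul]
    show Q i (σ j) = Q (σ⁻¹ i) j
    have h := hQ (σ⁻¹ i) j
    rw [Equiv.Perm.inv_def, Equiv.apply_symm_apply] at h
    exact h
  have hcomm' : Q * Pm σ⁻¹ = Pm σ⁻¹ * Q := by
    ext i j
    rw [mul_Pm, Pm_mul]
    show Q i (σ⁻¹ j) = Q (σ⁻¹⁻¹ i) j
    rw [inv_inv]
    have h := hQ i (σ⁻¹ j)
    rw [Equiv.Perm.inv_def, Equiv.apply_symm_apply] at h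
    exact h.symm
  set M : Matrix (Fin 6) (Fin 6) ℚ := V * Pm σ * Vᵀ * Gm⁻¹ with hMdef
  set N : Matrix (Fin 6) (Fin 6) ℚ := V * Pm σ⁻¹ * Vᵀ * Gm⁻¹ with hNdef
  have key : ∀ (τ : Equiv.Perm (Fin 9)), Q * Pm τ = Pm τ * Q →
      (V * Pm τ * Vᵀ * Gm⁻¹) * V = V * Pm τ := by
    intro τ hτ
    have h1 : (V * Pm τ * Vᵀ * Gm⁻¹) * V = V * Pm τ * Q := by
      rw [Q_eq]
      simp only [Matrix.mul_assoc]
    rw [h1, Matrix.mul_assoc, ← hτ, ← Matrix.mul_assoc, V_mul_Q]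
  have hMV : M * V = V * Pm σ := key σ hcomm
  have hNV : N * V = V * Pm σ⁻¹ := key σ⁻¹ hcomm'
  have hVVG : V * (Vᵀ * Gm⁻¹) = 1 := by
    rw [← Matrix.mul_assoc]
    exact G_mul_Ginv
  have hMN : M * N = 1 := by
    have h1 : M * N = (M * V) * (Pm σ⁻¹ * (Vᵀ * Gm⁻¹)) := by
      rw [hNdef]
      simp only [Matrix.mul_assoc]
    rw [h1, hMV]
    calc V * Pm σ * (Pm σ⁻¹ * (Vᵀ * Gm⁻¹))
        = V * (Pm σ * Pm σ⁻¹) * (Vᵀ * Gm⁻¹) := by simp only [Matrix.mul_assoc]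
      _ = 1 := by rw [Pm_inv_mul, Matrix.mul_one, hVVG]
  have hNM : N * M = 1 := by
    have h1 : N * M = (N * V) * (Pm σ * (Vᵀ * Gm⁻¹)) := by
      rw [hMdef]
      simp only [Matrix.mul_assoc]
    rw [h1, hNV]
    calc V * Pm σ⁻¹ * (Pm σ * (Vᵀ * Gm⁻¹))
        = V * (Pm σ⁻¹ * Pm σ) * (Vᵀ * Gm⁻¹) := by simp only [Matrix.mul_assoc]
      _ = 1 := by
          rw [show Pm σ⁻¹ * Pm σ = 1 by
            rw [Pm_mul_Pm, show σ⁻¹ * σ = 1 by group, Pm_one], Matrix.mul_one, hVVG]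
  refine ⟨LinearEquiv.ofLinear (Matrix.toLin' M) (Matrix.toLin' N) ?_ ?_, ?_⟩
  · rw [← Matrix.toLin'_mul, hMN, Matrix.toLin'_one]
  · rw [← Matrix.toLin'_mul, hNM, Matrix.toLin'_one]
  · intro i
    show Matrix.toLin' M (_root_.col i) = _root_.col (σ i)
    rw [Matrix.toLin'_apply]
    funext r
    have h1 : M.mulVec (_root_.col i) r = (M * V) r i := by
      simp [Matrix.mulVec, Matrix.mul_apply, dotProduct, _root_.col]
    rw [h1, hMV, mul_Pm]
    rfl

end BDS

/-- Bremner–Dutour Sikirić–Schürmann, Proposition 3, for this configuration: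
a permutation `σ` of the columns is induced by an invertible linear map of `ℚ^6`
iff `Q` is invariant under `σ`. -/
theorem linear_symmetry_iff_Q_invariant (σ : Equiv.Perm (Fin 9)) :
    (∃ F : (Fin 6 → ℚ) ≃ₗ[ℚ] (Fin 6 → ℚ), ∀ i, F (col i) = col (σ i)) ↔
      ∀ i j, Q (σ i) (σ j) = Q i j := by
  constructor
  · rintro ⟨F, hF⟩
    exact BDS.forward σ F hF
  · exact BDS.backward σ
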